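/- Let λ, μ > 0 and n ∈ ℕ with λμn = 1, and let ⟦r⟧ := ⌊r + 1/2⌋ denote the nearest integer to r ∈ ℝ. Define φ : λℤ × μℤ → ℤ × ℤ by φ(λx, μy) = (X(x,y), Y(x,y)) where X(x,y) = y + ⟦λx − λ⟦y/λ⟧⟧ and Y(x,y) = ⟦μX(x,y) − (x − ⟦y/λ⟧)/n⟧ for x, y ∈ ℤ. Then: (1) |X(x,y) − λx| ≤ (λ+1)/2 and |Y(x,y) − μy| ≤ (μ+1)/2 for all x, y ∈ ℤ; (2) for every (X₀, Y₀) ∈ ℤ², the preimage φ⁻¹(X₀, Y₀) has exactly n elements, and there exists v ∈ ℝ² with φ⁻¹(X₀, Y₀) ⊆ v + [0, λ+1) × [0, μ+1). -/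
import Mathlib


/-- The nearest integer to a real number: `⟦r⟧ = ⌊r + 1/2⌋`. -/
noncomputable def nint (r : ℝ) : ℤ := ⌊r + 1 / 2⌋

/-- The first coordinate of the Duneau–Oguey map:
`X(x,y) = y + ⟦λx − λ⟦y/λ⟧⟧`. -/
noncomputable def DOX (lam : ℝ) (x y : ℤ) : ℤ :=
  y + nint (lam * (x : ℝ) - lam * (nint ((y : ℝ) / lam) : ℝ))

/-- The second coordinate of the Duneau–Oguey map:
`Y(x,y) = ⟦μX(x,y) − (x − ⟦y/λ⟧)/n⟧`. -/
noncomputable def DOY (lam mu : ℝ) (n : ℕ) (x y : ℤ) : ℤ :=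
  nint (mu * (DOX lam x y : ℝ) - ((x : ℝ) - (nint ((y : ℝ) / lam) : ℝ)) / (n : ℝ))

lemma nint_le (r : ℝ) : (nint r : ℝ) ≤ r + 1 / 2 := Int.floor_le _

lemma lt_nint (r : ℝ) : r - 1 / 2 < (nint r : ℝ) := by
  have h := Int.lt_floor_add_one (r + 1 / 2)
  unfold nint
  linarith

lemma nint_eq_iff {r : ℝ} {m : ℤ} : nint r = m ↔ (m : ℝ) ≤ r + 1 / 2 ∧ r + 1 / 2 < m + 1 := by
  unfold nint
  rw [Int.floor_eq_iff]


lemma DO_bounded_aux (lam mu : ℝ) (hlam : 0 < lam) (hmu : 0 < mu) (n : ℕ)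
    (hn : lam * mu * (n : ℝ) = 1) (X₀ Y₀ x y : ℤ)
    (hX : DOX lam x y = X₀) (hY : DOY lam mu n x y = Y₀) :
    ((X₀ : ℝ) - (lam + 1) / 2 ≤ lam * (x : ℝ) ∧
      lam * (x : ℝ) < (X₀ : ℝ) - (lam + 1) / 2 + (lam + 1)) ∧
    ((Y₀ : ℝ) - (mu + 1) / 2 ≤ mu * (y : ℝ) ∧
      mu * (y : ℝ) < (Y₀ : ℝ) - (mu + 1) / 2 + (mu + 1)) := by
  have hn0 : (n : ℝ) ≠ 0 := by
    intro h
    rw [h, mul_zero] at hn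
    exact one_ne_zero hn.symm
  have hlam0 : lam ≠ 0 := ne_of_gt hlam
  have hdiv : ∀ z : ℝ, z / (n : ℝ) = lam * mu * z := by
    intro z
    rw [div_eq_iff hn0]
    linear_combination -z * hn
  have hDOY : DOY lam mu n x y =
      nint (mu * (DOX lam x y : ℝ) - lam * mu * ((x : ℝ) - (nint ((y : ℝ) / lam) : ℝ))) := by
    unfold DOY
    rw [hdiv]
  set q : ℤ := nint ((y : ℝ) / lam) with hq
  set t : ℝ := lam * (x : ℝ) - lam * (q : ℝ) with ht
  have h1 := nint_le ((y : ℝ) / lam)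
  have h2 := lt_nint ((y : ℝ) / lam)
  have h3 := nint_le t
  have h4 := lt_nint t
  have hy : lam * ((y : ℝ) / lam) = (y : ℝ) := by field_simp
  have hbq1 : lam * (q : ℝ) ≤ (y : ℝ) + lam / 2 := by nlinarith
  have hbq2 : (y : ℝ) - lam / 2 < lam * (q : ℝ) := by nlinarith
  have hXv : ((X₀ : ℝ)) = (y : ℝ) + (nint t : ℝ) := by
    rw [← hX, ht, hq]
    unfold DOX
    push_cast
    ring
  have hYv : Y₀ = nint (mu * (X₀ : ℝ) - lam * mu * ((x : ℝ) - (q : ℝ))) := by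
    rw [hq, ← hY, hDOY, hX]
  have hY5 : (Y₀ : ℝ) ≤ (mu * (X₀ : ℝ) - lam * mu * ((x : ℝ) - (q : ℝ))) + 1 / 2 := by
    rw [hYv]; exact nint_le _
  have hY6 : (mu * (X₀ : ℝ) - lam * mu * ((x : ℝ) - (q : ℝ))) - 1 / 2 < (Y₀ : ℝ) := by
    rw [hYv]; exact lt_nint _
  have hub : mu * ((nint t : ℝ) - t) ≤ mu / 2 := by nlinarith
  have hlb : -(mu / 2) < mu * ((nint t : ℝ) - t) := by nlinarith
  have hsy : (mu * (X₀ : ℝ) - lam * mu * ((x : ℝ) - (q : ℝ))) - mu * (y : ℝ)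
      = mu * ((nint t : ℝ) - t) := by
    rw [hXv, ht]; ring
  have hlx : lam * (x : ℝ) = t + lam * (q : ℝ) := by rw [ht]; ring
  clear_value q t
  refine ⟨⟨?_, ?_⟩, ?_, ?_⟩ <;> linarith

theorem stmt17 (lam mu : ℝ) (hlam : 0 < lam) (hmu : 0 < mu) (n : ℕ)
    (hn : lam * mu * (n : ℝ) = 1) :
    (∀ x y : ℤ,
      |(DOX lam x y : ℝ) - lam * (x : ℝ)| ≤ (lam + 1) / 2 ∧
      |(DOY lam mu n x y : ℝ) - mu * (y : ℝ)| ≤ (mu + 1) / 2) ∧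
    (∀ X₀ Y₀ : ℤ,
      {p : ℤ × ℤ | DOX lam p.1 p.2 = X₀ ∧ DOY lam mu n p.1 p.2 = Y₀}.ncard = n ∧
      ∃ v : ℝ × ℝ, ∀ p : ℤ × ℤ,
        DOX lam p.1 p.2 = X₀ → DOY lam mu n p.1 p.2 = Y₀ →
          (v.1 ≤ lam * (p.1 : ℝ) ∧ lam * (p.1 : ℝ) < v.1 + (lam + 1)) ∧
          (v.2 ≤ mu * (p.2 : ℝ) ∧ mu * (p.2 : ℝ) < v.2 + (mu + 1))) := by
  have hn0 : (n : ℝ) ≠ 0 := by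
    intro h
    rw [h, mul_zero] at hn
    exact one_ne_zero hn.symm
  have hlam0 : lam ≠ 0 := ne_of_gt hlam
  have hdiv : ∀ z : ℝ, z / (n : ℝ) = lam * mu * z := by
    intro z
    rw [div_eq_iff hn0]
    linear_combination -z * hn
  have hyq : ∀ y : ℤ, lam * ((y : ℝ) / lam) = (y : ℝ) := by
    intro y; field_simp
  have hDOY : ∀ x y : ℤ, DOY lam mu n x y =
      nint (mu * (DOX lam x y : ℝ) - lam * mu * ((x : ℝ) - (nint ((y : ℝ) / lam) : ℝ))) := by
    intro x y
    unfold DOY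
    rw [hdiv]
  constructor
  · intro x y
    set q : ℤ := nint ((y : ℝ) / lam) with hq
    set t : ℝ := lam * (x : ℝ) - lam * (q : ℝ) with ht
    have h1 := nint_le ((y : ℝ) / lam)
    have h2 := lt_nint ((y : ℝ) / lam)
    have h3 := nint_le t
    have h4 := lt_nint t
    have hy := hyq y
    have hbq1 : lam * (q : ℝ) ≤ (y : ℝ) + lam / 2 := by nlinarith
    have hbq2 : (y : ℝ) - lam / 2 < lam * (q : ℝ) := by nlinarith
    have hX : (DOX lam x y : ℝ) = (y : ℝ) + (nint t : ℝ) := by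
      rw [ht, hq]; unfold DOX; push_cast; ring
    constructor
    · rw [hX, abs_le]
      constructor <;> linarith
    · rw [hDOY x y]
      set s : ℝ := mu * (DOX lam x y : ℝ) - lam * mu * ((x : ℝ) - (q : ℝ)) with hs
      have h5 := nint_le s
      have h6 := lt_nint s
      have hsy : s - mu * (y : ℝ) = mu * ((nint t : ℝ) - t) := by
        rw [hs, hX, ht]; ring
      have hub : mu * ((nint t : ℝ) - t) ≤ mu / 2 := by nlinarith
      have hlb : -(mu / 2) < mu * ((nint t : ℝ) - t) := by nlinarith
      clear_value q t s
      rw [abs_le]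
      constructor <;> linarith
  · intro X₀ Y₀
    classical
    set d : ℝ := lam * mu with hd
    have hdpos : 0 < d := mul_pos hlam hmu
    have hdn : d * (n : ℝ) = 1 := hn
    set yk : ℤ → ℤ := fun k => X₀ - nint (lam * (k : ℝ)) with hyk
    set ψ : ℤ → ℤ × ℤ := fun k => (nint ((yk k : ℝ) / lam) + k, yk k) with hψ
    have hψ1 : ∀ k : ℤ, (ψ k).1 = nint ((yk k : ℝ) / lam) + k := fun k => rfl
    have hψ2 : ∀ k : ℤ, (ψ k).2 = yk k := fun k => rfl
    have hykv : ∀ k : ℤ, yk k = X₀ - nint (lam * (k : ℝ)) := fun k => rfl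
    have hinj : Function.Injective ψ := by
      intro k k' h
      have h2 : yk k = yk k' := congrArg Prod.snd h
      have h1 : nint ((yk k : ℝ) / lam) + k = nint ((yk k' : ℝ) / lam) + k' :=
        congrArg Prod.fst h
      rw [h2] at h1
      omega
    set K : Set ℤ := {k | nint (mu * (X₀ : ℝ) - d * (k : ℝ)) = Y₀} with hK
    have key1 : ∀ (k y : ℤ), DOX lam (nint ((y : ℝ) / lam) + k) y = y + nint (lam * (k : ℝ)) := by
      intro k y
      unfold DOX
      congr 2
      push_cast
      ring
    have key2 : ∀ (k y : ℤ), DOY lam mu n (nint ((y : ℝ) / lam) + k) y =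
        nint (mu * (DOX lam (nint ((y : ℝ) / lam) + k) y : ℝ) - d * (k : ℝ)) := by
      intro k y
      rw [hDOY]
      congr 2
      push_cast
      ring
    have hDOXψ : ∀ k : ℤ, DOX lam (ψ k).1 (ψ k).2 = X₀ := by
      intro k
      rw [hψ1, hψ2, key1, hykv]
      omega
    have hDOYψ : ∀ k : ℤ, k ∈ K → DOY lam mu n (ψ k).1 (ψ k).2 = Y₀ := by
      intro k hk
      have h := hDOXψ k
      rw [hψ1, hψ2] at h ⊢
      rw [key2, h]
      exact hk
    have hSeq : {p : ℤ × ℤ | DOX lam p.1 p.2 = X₀ ∧ DOY lam mu n p.1 p.2 = Y₀} = ψ '' K := by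
      ext ⟨x, y⟩
      simp only [Set.mem_setOf_eq, Set.mem_image]
      constructor
      · rintro ⟨hX, hY⟩
        refine ⟨x - nint ((y : ℝ) / lam), ?_, ?_⟩
        · show nint (mu * (X₀ : ℝ) - d * ((x - nint ((y : ℝ) / lam) : ℤ) : ℝ)) = Y₀
          rw [hDOY, hX] at hY
          rw [← hY]
          congr 1
          push_cast
          ring
        · have h := key1 (x - nint ((y : ℝ) / lam)) y
          rw [show nint ((y : ℝ) / lam) + (x - nint ((y : ℝ) / lam)) = x by ring] at h
          have hky : yk (x - nint ((y : ℝ) / lam)) = y := by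
            rw [hykv]; omega
          have hev : ψ (x - nint ((y : ℝ) / lam)) =
              (nint ((yk (x - nint ((y : ℝ) / lam)) : ℝ) / lam) + (x - nint ((y : ℝ) / lam)),
               yk (x - nint ((y : ℝ) / lam))) := rfl
          rw [hev, hky]
          refine Prod.ext ?_ rfl
          simp
      · rintro ⟨k, hk, hpk⟩
        have h1 := hDOXψ k
        have h2 := hDOYψ k hk
        rw [hpk] at h1 h2
        exact ⟨h1, h2⟩
    constructor
    · set a : ℝ := (mu * (X₀ : ℝ) - (Y₀ : ℝ) - 1 / 2) / d with ha
      have hda : d * a = mu * (X₀ : ℝ) - (Y₀ : ℝ) - 1 / 2 := by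
        rw [ha]
        field_simp
      have hKfin : K = ↑(Finset.Ioc ⌊a⌋ (⌊a⌋ + (n : ℤ))) := by
        ext k
        rw [hK, Set.mem_setOf_eq, Finset.coe_Ioc, Set.mem_Ioc]
        rw [nint_eq_iff]
        constructor
        · rintro ⟨hA, hB⟩
          constructor
          · rw [Int.floor_lt, ha]
            rw [div_lt_iff₀ hdpos]
            push_cast at hB ⊢
            nlinarith
          · have h1 : (k : ℝ) ≤ a + (n : ℝ) := by
              rw [ha]
              rw [← sub_le_iff_le_add]
              rw [le_div_iff₀ hdpos]
              push_cast at hA ⊢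
              nlinarith
            have h2 : k ≤ ⌊a + (n : ℝ)⌋ := Int.le_floor.mpr (by push_cast; linarith)
            rw [show a + (n : ℝ) = a + ((n : ℤ) : ℝ) by push_cast; ring,
              Int.floor_add_intCast] at h2
            exact h2
        · rintro ⟨hA, hB⟩
          have h1 : a < (k : ℝ) := Int.floor_lt.mp hA
          have h2 : (k : ℝ) ≤ a + (n : ℝ) := by
            have h4 : (k : ℝ) ≤ ((⌊a⌋ + (n : ℤ) : ℤ) : ℝ) := by exact_mod_cast hB
            have h3 : ((⌊a⌋ : ℤ) : ℝ) ≤ a := Int.floor_le a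
            push_cast at h4
            linarith
          have hA' : d * a < d * (k : ℝ) := by nlinarith
          have hB' : d * (k : ℝ) ≤ d * a + 1 := by nlinarith
          rw [hda] at hA' hB'
          constructor <;> push_cast <;> linarith
      rw [hSeq, Set.ncard_image_of_injective _ hinj, hKfin, Set.ncard_coe_finset,
        Int.card_Ioc]
      simp
    · refine ⟨((X₀ : ℝ) - (lam + 1) / 2, (Y₀ : ℝ) - (mu + 1) / 2), ?_⟩
      rintro ⟨x, y⟩ hX hY
      simpa using DO_bounded_aux lam mu hlam hmu n hn X₀ Y₀ x y hX hY
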